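/- (Theorem 5.1: axiomatization by existential positive sentences.) Let A be a fixed finite MTL-chain, P a predicate language, and T a set of P-sentences that has an A-model. Then T is closed under homomorphisms if and only if T is axiomatized by a set of existential positive P-sentences. -/

import Mathlib

noncomputable section
open Classical

universe u

/-- A finite MTL-chain: a finite linearly ordered set with least and greatest
elements, a commutative monoid operation `*` with unit `1 = ⊤` that is monotone
in each argument, and the residuum determined by `a * b ≤ c ↔ a ≤ resid b c`. -/
class MTLChain (A : Type u) extends Fintype A, LinearOrder A, CommMonoid A, BoundedOrder A where
  one_eq_top : (1 : A) = ⊤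
  mul_mono : ∀ {a b : A}, a ≤ b → ∀ c : A, c * a ≤ c * b
  resid : A → A → A
  resid_galois : ∀ a b c : A, a * b ≤ c ↔ a ≤ resid b c

noncomputable instance MTLChain.toCompleteLinearOrder (A : Type u) [MTLChain A] :
    CompleteLinearOrder A :=
  Fintype.toCompleteLinearOrder A

/-- A predicate language: predicate symbols and function symbols, each with
a finite arity.  (Nullary predicates are truth constants, nullary functions
are individual constants.)  Crisp equality `≈` is built into formulas. -/
structure Lang : Type (u + 1) where
  Pred : Type u
  predAr : Pred → ℕ
  Func : Type u
  funcAr : Func → ℕ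

variable {A : Type u} [MTLChain A] {L : Lang.{u}}

/-- Terms of a predicate language, with variables indexed by `ℕ`. -/
inductive Term (L : Lang.{u}) : Type u where
  | var : ℕ → Term L
  | func (f : L.Func) (ts : Fin (L.funcAr f) → Term L) : Term L

/-- Formulas: atomic formulas (predicates applied to terms, and crisp equality),
strong conjunction `&`, weak conjunction `∧`, weak disjunction `∨`,
implication `→`, and the quantifiers. -/
inductive Formula (L : Lang.{u}) : Type u where
  | rel (P : L.Pred) (ts : Fin (L.predAr P) → Term L) : Formula L
  | eq (t₁ t₂ : Term L) : Formula L
  | sconj (φ ψ : Formula L) : Formula L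
  | wconj (φ ψ : Formula L) : Formula L
  | wdisj (φ ψ : Formula L) : Formula L
  | impl (φ ψ : Formula L) : Formula L
  | all (x : ℕ) (φ : Formula L) : Formula L
  | ex (x : ℕ) (φ : Formula L) : Formula L

/-- An `A`-structure for the language `L`: a nonempty domain, an `A`-valued
interpretation of each predicate symbol, and an interpretation of each
function symbol. -/
structure Structure (L : Lang.{u}) (A : Type u) [MTLChain A] : Type (u + 1) where
  Dom : Type u
  [dom_nonempty : Nonempty Dom]
  funMap (f : L.Func) : (Fin (L.funcAr f) → Dom) → Dom
  relMap (P : L.Pred) : (Fin (L.predAr P) → Dom) → A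

attribute [instance] Structure.dom_nonempty

/-- Value of a term under an evaluation of the variables. -/
def Term.val (M : Structure L A) (v : ℕ → M.Dom) : Term L → M.Dom
  | .var n => v n
  | .func f ts => M.funMap f fun i => (ts i).val M v

/-- Truth value of a formula in an `A`-structure under an evaluation of the
variables.  Equality is crisp, `&` is interpreted by `*`, `∧` by minimum,
`∨` by maximum, `→` by the residuum, `∀` by infimum (= minimum) and `∃` by
supremum (= maximum) over the domain. -/
def Formula.val (M : Structure L A) : Formula L → (ℕ → M.Dom) → A
  | .rel P ts, v => M.relMap P fun i => (ts i).val M v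
  | .eq t₁ t₂, v => if t₁.val M v = t₂.val M v then 1 else ⊥
  | .sconj φ ψ, v => φ.val M v * ψ.val M v
  | .wconj φ ψ, v => φ.val M v ⊓ ψ.val M v
  | .wdisj φ ψ, v => φ.val M v ⊔ ψ.val M v
  | .impl φ ψ, v => MTLChain.resid (φ.val M v) (ψ.val M v)
  | .all x φ, v => ⨅ a : M.Dom, φ.val M (Function.update v x a)
  | .ex x φ, v => ⨆ a : M.Dom, φ.val M (Function.update v x a)

/-- Free variables of a term. -/
def Term.fvars : Term L → Set ℕ
  | .var n => {n}
  | .func _ ts => ⋃ i, (ts i).fvars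

/-- Free variables of a formula. -/
def Formula.fvars : Formula L → Set ℕ
  | .rel _ ts => ⋃ i, (ts i).fvars
  | .eq t₁ t₂ => t₁.fvars ∪ t₂.fvars
  | .sconj φ ψ => φ.fvars ∪ ψ.fvars
  | .wconj φ ψ => φ.fvars ∪ ψ.fvars
  | .wdisj φ ψ => φ.fvars ∪ ψ.fvars
  | .impl φ ψ => φ.fvars ∪ ψ.fvars
  | .all x φ => φ.fvars \ {x}
  | .ex x φ => φ.fvars \ {x}

/-- A sentence is a formula with no free variables. -/
def Formula.IsSentence (φ : Formula L) : Prop := φ.fvars = ∅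

/-- `φ` is valid in `M` (i.e. `‖φ‖_M = 1`). -/
def Valid (M : Structure L A) (φ : Formula L) : Prop :=
  ∀ v : ℕ → M.Dom, φ.val M v = 1

/-- `M` is an `A`-model of the set of sentences `T`. -/
def Models (M : Structure L A) (T : Set (Formula L)) : Prop :=
  ∀ φ ∈ T, Valid M φ

/-- Two structures are elementarily equivalent if the same sentences are valid
in both (i.e. they have the same theory). -/
def ElemEquiv (M N : Structure L A) : Prop :=
  ∀ φ : Formula L, φ.IsSentence → (Valid M φ ↔ Valid N φ)

/-- `g : M → N` is a homomorphism of `A`-structures: it commutes with the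
interpretation of function symbols, and preserves truth (value `1`) of
atomic predicates. -/
structure IsHom (M N : Structure L A) (g : M.Dom → N.Dom) : Prop where
  map_fun : ∀ (f : L.Func) (d : Fin (L.funcAr f) → M.Dom),
    g (M.funMap f d) = N.funMap f (g ∘ d)
  map_rel : ∀ (P : L.Pred) (d : Fin (L.predAr P) → M.Dom),
    M.relMap P d = 1 → N.relMap P (g ∘ d) = 1

/-- Atomic formulas. -/
inductive IsAtomicFormula : Formula L → Prop
  | rel (P : L.Pred) (ts : Fin (L.predAr P) → Term L) : IsAtomicFormula (.rel P ts)
  | eq (t₁ t₂ : Term L) : IsAtomicFormula (.eq t₁ t₂)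

/-- Quantifier-free formulas built from atomic formulas using only `∧` and `&`. -/
inductive QFConj : Formula L → Prop
  | atom {φ : Formula L} : IsAtomicFormula φ → QFConj φ
  | sconj {φ ψ : Formula L} : QFConj φ → QFConj ψ → QFConj (.sconj φ ψ)
  | wconj {φ ψ : Formula L} : QFConj φ → QFConj ψ → QFConj (.wconj φ ψ)

/-- Quantifier-free formulas built from atomic formulas using only `∧`. -/
inductive QFWConj : Formula L → Prop
  | atom {φ : Formula L} : IsAtomicFormula φ → QFWConj φ
  | wconj {φ ψ : Formula L} : QFWConj φ → QFWConj ψ → QFWConj (.wconj φ ψ)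

/-- Quantifier-free formulas built from atomic formulas using only `&`. -/
inductive QFSConj : Formula L → Prop
  | atom {φ : Formula L} : IsAtomicFormula φ → QFSConj φ
  | sconj {φ ψ : Formula L} : QFSConj φ → QFSConj ψ → QFSConj (.sconj φ ψ)

/-- Quantifier-free formulas built from atomic formulas using only `∧`, `∨` and `&`. -/
inductive QFPos : Formula L → Prop
  | atom {φ : Formula L} : IsAtomicFormula φ → QFPos φ
  | sconj {φ ψ : Formula L} : QFPos φ → QFPos ψ → QFPos (.sconj φ ψ)
  | wconj {φ ψ : Formula L} : QFPos φ → QFPos ψ → QFPos (.wconj φ ψ)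
  | wdisj {φ ψ : Formula L} : QFPos φ → QFPos ψ → QFPos (.wdisj φ ψ)

/-- Positive-primitive (∧&-primitive) formulas: `(∃ x̄) ψ` with `ψ`
quantifier-free built from atomic formulas using only `∧` and `&`. -/
inductive IsPP : Formula L → Prop
  | base {φ : Formula L} : QFConj φ → IsPP φ
  | ex {φ : Formula L} (x : ℕ) : IsPP φ → IsPP (.ex x φ)

/-- ∧-primitive formulas. -/
inductive IsWPrimitive : Formula L → Prop
  | base {φ : Formula L} : QFWConj φ → IsWPrimitive φ
  | ex {φ : Formula L} (x : ℕ) : IsWPrimitive φ → IsWPrimitive (.ex x φ)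

/-- &-primitive formulas. -/
inductive IsSPrimitive : Formula L → Prop
  | base {φ : Formula L} : QFSConj φ → IsSPrimitive φ
  | ex {φ : Formula L} (x : ℕ) : IsSPrimitive φ → IsSPrimitive (.ex x φ)

/-- Existential positive formulas: `(∃ x̄) ψ` with `ψ` quantifier-free built
from atomic formulas using only `∧`, `∨` and `&`. -/
inductive IsExPos : Formula L → Prop
  | base {φ : Formula L} : QFPos φ → IsExPos φ
  | ex {φ : Formula L} (x : ℕ) : IsExPos φ → IsExPos (.ex x φ)

/-- The `A`-direct product of a nonempty family of `A`-structures: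
cartesian product domain, coordinatewise interpretation of function symbols,
and predicates interpreted by the minimum of the coordinatewise values. -/
def dirProd {I : Type u} [Nonempty I] (Ms : I → Structure L A) : Structure L A where
  Dom := ∀ i, (Ms i).Dom
  funMap f d := fun i => (Ms i).funMap f fun k => d k i
  relMap P d := ⨅ i, (Ms i).relMap P fun k => d k i

/-- The data of a weak `A`-direct product of a family of `A`-structures: an
interpretation of the predicate symbols on the cartesian product taking value
`1` exactly when all the coordinatewise values are `1`. -/
structure WeakProdData {I : Type u} (Ms : I → Structure L A) : Type u where
  relMap (P : L.Pred) : (Fin (L.predAr P) → ∀ i, (Ms i).Dom) → A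
  rel_one_iff : ∀ (P : L.Pred) (d : Fin (L.predAr P) → ∀ i, (Ms i).Dom),
    relMap P d = 1 ↔ ∀ i, (Ms i).relMap P (fun k => d k i) = 1

/-- The weak `A`-direct product structure determined by such data. -/
def WeakProdData.toStructure {I : Type u} [Nonempty I] {Ms : I → Structure L A}
    (W : WeakProdData Ms) : Structure L A where
  Dom := ∀ i, (Ms i).Dom
  funMap f d := fun i => (Ms i).funMap f fun k => d k i
  relMap := W.relMap
section Basic
variable {A : Type u} [MTLChain A] {L : Lang.{u}}

lemma le_one' (a : A) : a ≤ 1 := by rw [MTLChain.one_eq_top]; exact le_top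

lemma eq_one_of_one_le {a : A} (h : (1:A) ≤ a) : a = 1 := le_antisymm (le_one' a) h

lemma mulEqOneIff {a b : A} : a * b = 1 ↔ a = 1 ∧ b = 1 := by
  constructor
  · intro h
    have h1 : a * b ≤ a * 1 := MTLChain.mul_mono (le_one' b) a
    rw [mul_one] at h1
    have h2 : b * a ≤ b * 1 := MTLChain.mul_mono (le_one' a) b
    rw [mul_one, mul_comm] at h2
    exact ⟨eq_one_of_one_le (h ▸ h1), eq_one_of_one_le (h ▸ h2)⟩
  · rintro ⟨rfl, rfl⟩; rw [one_mul]

lemma infEqOneIff {a b : A} : a ⊓ b = 1 ↔ a = 1 ∧ b = 1 := by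
  constructor
  · intro h
    exact ⟨eq_one_of_one_le (h ▸ inf_le_left), eq_one_of_one_le (h ▸ inf_le_right)⟩
  · rintro ⟨rfl, rfl⟩; exact inf_idem 1

lemma supEqOneIff {a b : A} : a ⊔ b = 1 ↔ a = 1 ∨ b = 1 := by
  constructor
  · intro h
    rcases le_total a b with hab | hab
    · right; rw [sup_eq_right.2 hab] at h; exact h
    · left; rw [sup_eq_left.2 hab] at h; exact h
  · rintro (rfl | rfl)
    · exact le_antisymm (sup_le (le_one' _) (le_one' _)) le_sup_left
    · exact le_antisymm (sup_le (le_one' _) (le_one' _)) le_sup_right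

lemma existsEqISup {X : Type u} [Nonempty X] (f : X → A) : ∃ x, f x = ⨆ y, f y := by
  have hne : (Set.range f).Nonempty := Set.range_nonempty f
  have hfin : (Set.range f).Finite := Set.toFinite _
  have := hne.csSup_mem hfin
  rw [← sSup_range]
  exact this

lemma existsEqIInf {X : Type u} [Nonempty X] (f : X → A) : ∃ x, f x = ⨅ y, f y := by
  have hne : (Set.range f).Nonempty := Set.range_nonempty f
  have hfin : (Set.range f).Finite := Set.toFinite _
  have := hne.csInf_mem hfin
  rw [← sInf_range]
  exact this

lemma iSupEqOneIff {X : Type u} [Nonempty X] (f : X → A) :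
    (⨆ x, f x) = 1 ↔ ∃ x, f x = 1 := by
  constructor
  · intro h
    obtain ⟨x, hx⟩ := existsEqISup f
    exact ⟨x, hx.trans h⟩
  · rintro ⟨x, hx⟩
    exact le_antisymm (by apply iSup_le; intro y; exact le_one' _) (hx ▸ le_iSup f x)

lemma iInfEqOneIff {X : Type u} [Nonempty X] (f : X → A) :
    (⨅ x, f x) = 1 ↔ ∀ x, f x = 1 := by
  constructor
  · intro h x
    exact eq_one_of_one_le (h ▸ iInf_le f x)
  · intro h
    obtain ⟨x, hx⟩ := existsEqIInf f
    rw [← hx, h x]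

end Basic
section Congr
variable {A : Type u} [MTLChain A] {L : Lang.{u}}

lemma Term.val_congr {M : Structure L A} {v w : ℕ → M.Dom} :
    ∀ {t : Term L}, (∀ n ∈ t.fvars, v n = w n) → t.val M v = t.val M w := by
  intro t
  induction t with
  | var n => intro h; exact h n (by simp [Term.fvars])
  | func f ts ih =>
      intro h
      show M.funMap f _ = M.funMap f _
      congr 1
      funext k
      exact ih k (fun n hn => h n (by simp only [Term.fvars, Set.mem_iUnion]; exact ⟨k, hn⟩))

lemma Formula.val_congr {M : Structure L A} :
    ∀ {φ : Formula L} {v w : ℕ → M.Dom}, (∀ n ∈ φ.fvars, v n = w n) →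
      φ.val M v = φ.val M w := by
  intro φ
  induction φ with
  | rel P ts =>
      intro v w h
      show M.relMap P _ = M.relMap P _
      congr 1
      funext k
      exact Term.val_congr (fun n hn => h n (by simp only [Formula.fvars, Set.mem_iUnion]; exact ⟨k, hn⟩))
  | eq t₁ t₂ =>
      intro v w h
      show (if _ then _ else _) = (if _ then _ else _)
      rw [Term.val_congr (fun n hn => h n (Set.mem_union_left _ hn)),
        Term.val_congr (fun n hn => h n (Set.mem_union_right _ hn))]
  | sconj φ ψ ihφ ihψ =>
      intro v w h
      show _ * _ = _ * _
      rw [ihφ (fun n hn => h n (Set.mem_union_left _ hn)),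
        ihψ (fun n hn => h n (Set.mem_union_right _ hn))]
  | wconj φ ψ ihφ ihψ =>
      intro v w h
      show _ ⊓ _ = _ ⊓ _
      rw [ihφ (fun n hn => h n (Set.mem_union_left _ hn)),
        ihψ (fun n hn => h n (Set.mem_union_right _ hn))]
  | wdisj φ ψ ihφ ihψ =>
      intro v w h
      show _ ⊔ _ = _ ⊔ _
      rw [ihφ (fun n hn => h n (Set.mem_union_left _ hn)),
        ihψ (fun n hn => h n (Set.mem_union_right _ hn))]
  | impl φ ψ ihφ ihψ =>
      intro v w h
      show MTLChain.resid _ _ = MTLChain.resid _ _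
      rw [ihφ (fun n hn => h n (Set.mem_union_left _ hn)),
        ihψ (fun n hn => h n (Set.mem_union_right _ hn))]
  | all x φ ih =>
      intro v w h
      show (⨅ a, _) = (⨅ a, _)
      apply iInf_congr
      intro a
      apply ih
      intro n hn
      rcases eq_or_ne n x with rfl | hne
      · simp [Function.update_self]
      · rw [Function.update_of_ne hne, Function.update_of_ne hne]
        exact h n ⟨hn, hne⟩
  | ex x φ ih =>
      intro v w h
      show (⨆ a, _) = (⨆ a, _)
      apply iSup_congr
      intro a
      apply ih
      intro n hn
      rcases eq_or_ne n x with rfl | hne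
      · simp [Function.update_self]
      · rw [Function.update_of_ne hne, Function.update_of_ne hne]
        exact h n ⟨hn, hne⟩

lemma sentence_val_congr {M : Structure L A} {φ : Formula L} (hφ : φ.IsSentence)
    (v w : ℕ → M.Dom) : φ.val M v = φ.val M w :=
  Formula.val_congr (fun n hn => by rw [Formula.IsSentence] at hφ; rw [hφ] at hn; exact absurd hn (Set.notMem_empty n))

lemma valid_iff_val {M : Structure L A} {φ : Formula L} (hφ : φ.IsSentence)
    (v₀ : ℕ → M.Dom) : Valid M φ ↔ φ.val M v₀ = 1 := by
  constructor
  · intro h; exact h v₀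
  · intro h v; rw [sentence_val_congr hφ v v₀]; exact h

end Congr
section HomPres
variable {A : Type u} [MTLChain A] {L : Lang.{u}}

lemma hom_term_val {M N : Structure L A} {g : M.Dom → N.Dom} (hg : IsHom M N g)
    (v : ℕ → M.Dom) : ∀ t : Term L, t.val N (g ∘ v) = g (t.val M v) := by
  intro t
  induction t with
  | var n => rfl
  | func f ts ih =>
      show N.funMap f _ = g (M.funMap f _)
      rw [hg.map_fun]
      congr 1
      funext k
      exact ih k

lemma update_comp {M N : Structure L A} (g : M.Dom → N.Dom) (v : ℕ → M.Dom)
    (x : ℕ) (a : M.Dom) :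
    g ∘ Function.update v x a = Function.update (g ∘ v) x (g a) := by
  funext n
  rcases eq_or_ne n x with rfl | hne
  · simp [Function.update_self]
  · simp [Function.update_of_ne hne]

lemma hom_pres_qfpos {M N : Structure L A} {g : M.Dom → N.Dom} (hg : IsHom M N g)
    {φ : Formula L} (hφ : QFPos φ) :
    ∀ v : ℕ → M.Dom, φ.val M v = 1 → φ.val N (g ∘ v) = 1 := by
  induction hφ with
  | atom h =>
      cases h with
      | rel P ts =>
          intro v hv
          show N.relMap P _ = 1
          have : (fun k => (ts k).val N (g ∘ v)) = g ∘ (fun k => (ts k).val M v) := by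
            funext k; exact hom_term_val hg v (ts k)
          rw [this]
          exact hg.map_rel P _ hv
      | eq t₁ t₂ =>
          intro v hv
          show (if t₁.val N (g ∘ v) = t₂.val N (g ∘ v) then (1:A) else ⊥) = 1
          rw [hom_term_val hg v t₁, hom_term_val hg v t₂]
          by_cases h : t₁.val M v = t₂.val M v
          · rw [if_pos (by rw [h])]
          · have hb : (⊥ : A) = 1 := by simpa [Formula.val, if_neg h] using hv
            split <;> simp [hb]
  | sconj _ _ ihφ ihψ =>
      intro v hv
      have := mulEqOneIff.1 hv
      show _ * _ = 1
      rw [ihφ v this.1, ihψ v this.2, one_mul]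
  | wconj _ _ ihφ ihψ =>
      intro v hv
      have := infEqOneIff.1 hv
      show _ ⊓ _ = 1
      rw [ihφ v this.1, ihψ v this.2]
      exact inf_idem 1
  | wdisj _ _ ihφ ihψ =>
      intro v hv
      show _ ⊔ _ = 1
      rcases supEqOneIff.1 hv with h | h
      · exact supEqOneIff.2 (Or.inl (ihφ v h))
      · exact supEqOneIff.2 (Or.inr (ihψ v h))

lemma hom_pres_expos {M N : Structure L A} {g : M.Dom → N.Dom} (hg : IsHom M N g)
    {φ : Formula L} (hφ : IsExPos φ) :
    ∀ v : ℕ → M.Dom, φ.val M v = 1 → φ.val N (g ∘ v) = 1 := by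
  induction hφ with
  | base h => exact hom_pres_qfpos hg h
  | ex x _ ih =>
      intro v hv
      show (⨆ a, _) = 1
      obtain ⟨a, ha⟩ := (iSupEqOneIff _).1 hv
      apply (iSupEqOneIff _).2
      refine ⟨g a, ?_⟩
      rw [← update_comp]
      exact ih _ ha

end HomPres
section Builders
variable {A : Type u} [MTLChain A] {L : Lang.{u}}

/-- Iterated existential closure. -/
def exsF (l : List ℕ) (φ : Formula L) : Formula L := l.foldr Formula.ex φ

@[simp] lemma exsF_nil (φ : Formula L) : exsF [] φ = φ := rfl
@[simp] lemma exsF_cons (x : ℕ) (l : List ℕ) (φ : Formula L) :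
    exsF (x :: l) φ = .ex x (exsF l φ) := rfl

lemma exsF_isExPos {l : List ℕ} {φ : Formula L} (h : IsExPos φ) : IsExPos (exsF l φ) := by
  induction l with
  | nil => exact h
  | cons x l ih => exact IsExPos.ex x ih

lemma exsF_fvars (l : List ℕ) (φ : Formula L) :
    (exsF l φ).fvars = φ.fvars \ {n | n ∈ l} := by
  induction l with
  | nil => simp
  | cons x l ih =>
      show (Formula.ex x (exsF l φ)).fvars = _
      rw [show (Formula.ex x (exsF l φ)).fvars = (exsF l φ).fvars \ {x} from rfl, ih]
      ext n
      simp only [Set.mem_diff, Set.mem_setOf_eq, List.mem_cons, Set.mem_singleton_iff]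
      tauto

lemma exsF_val_one_iff (M : Structure L A) (l : List ℕ) (φ : Formula L) (v : ℕ → M.Dom) :
    (exsF l φ).val M v = 1 ↔ ∃ w, (∀ n, n ∉ l → w n = v n) ∧ φ.val M w = 1 := by
  induction l generalizing v with
  | nil =>
      simp only [exsF_nil]
      constructor
      · intro h; exact ⟨v, fun n _ => rfl, h⟩
      · rintro ⟨w, hw, h⟩
        have : w = v := funext (fun n => hw n (List.not_mem_nil))
        rw [← this]; exact h
  | cons x l ih =>
      rw [exsF_cons]
      show (⨆ a, (exsF l φ).val M (Function.update v x a)) = 1 ↔ _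
      rw [iSupEqOneIff]
      constructor
      · rintro ⟨a, ha⟩
        obtain ⟨w, hw, h⟩ := (ih _).1 ha
        refine ⟨w, fun n hn => ?_, h⟩
        have hnx : n ≠ x := fun hnx => hn (hnx ▸ (List.mem_cons_self (a := x) (l := l)))
        have hnl : n ∉ l := fun hnl => hn (List.mem_cons_of_mem x hnl)
        rw [hw n hnl, Function.update_of_ne hnx]
      · rintro ⟨w, hw, h⟩
        refine ⟨w x, (ih _).2 ⟨w, fun n hn => ?_, h⟩⟩
        rcases eq_or_ne n x with rfl | hnx
        · simp [Function.update_self]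
        · rw [Function.update_of_ne hnx]
          exact hw n (fun hm => by rcases List.mem_cons.1 hm with h' | h'; exact hnx h'; exact hn h')

lemma exsF_isSentence {l : List ℕ} {φ : Formula L} (h : φ.fvars ⊆ {n | n ∈ l}) :
    (exsF l φ).IsSentence := by
  rw [Formula.IsSentence, exsF_fvars]
  exact Set.diff_eq_empty.2 h

lemma exsF_valid_iff {M : Structure L A} {l : List ℕ} {φ : Formula L}
    (h : φ.fvars ⊆ {n | n ∈ l}) :
    Valid M (exsF l φ) ↔ ∃ w : ℕ → M.Dom, φ.val M w = 1 := by
  have v₀ : ℕ → M.Dom := fun _ => Classical.arbitrary _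
  rw [valid_iff_val (exsF_isSentence h) v₀, exsF_val_one_iff]
  constructor
  · rintro ⟨w, _, hw⟩; exact ⟨w, hw⟩
  · rintro ⟨w, hw⟩
    refine ⟨fun n => if n ∈ l then w n else v₀ n, fun n hn => if_neg hn, ?_⟩
    rw [← hw]
    apply Formula.val_congr
    intro n hn
    exact if_pos (h hn)

/-- A formula valid everywhere. -/
def trueF : Formula L := .eq (.var 0) (.var 0)

@[simp] lemma trueF_val (M : Structure L A) (v : ℕ → M.Dom) : (trueF (L := L)).val M v = 1 := by
  simp [trueF, Formula.val]

/-- Finite conjunction of a list of formulas. -/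
def cnjL (l : List (Formula L)) : Formula L := l.foldr Formula.wconj trueF

lemma cnjL_qfpos (l : List (Formula L)) (h : ∀ ψ ∈ l, QFPos ψ) : QFPos (cnjL l) := by
  induction l with
  | nil => exact QFPos.atom (IsAtomicFormula.eq _ _)
  | cons ψ l ih =>
      exact QFPos.wconj (h ψ (List.mem_cons_self))
        (ih (fun ψ' h' => h ψ' (List.mem_cons_of_mem _ h')))

lemma cnjL_val_one_iff (M : Structure L A) (l : List (Formula L)) (v : ℕ → M.Dom) :
    (cnjL l).val M v = 1 ↔ ∀ ψ ∈ l, ψ.val M v = 1 := by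
  induction l with
  | nil => simp [cnjL]
  | cons ψ l ih =>
      show (ψ.val M v ⊓ (cnjL l).val M v) = 1 ↔ _
      rw [infEqOneIff, ih]
      constructor
      · rintro ⟨h1, h2⟩ χ hχ
        rcases List.mem_cons.1 hχ with rfl | h'
        · exact h1
        · exact h2 χ h'
      · intro h
        exact ⟨h ψ (List.mem_cons_self), fun χ h' => h χ (List.mem_cons_of_mem _ h')⟩

lemma cnjL_fvars (l : List (Formula L)) :
    (cnjL l).fvars ⊆ {0} ∪ {n | ∃ ψ ∈ l, n ∈ ψ.fvars} := by
  induction l with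
  | nil =>
      intro n hn
      simp only [cnjL, List.foldr_nil, trueF, Formula.fvars, Term.fvars] at hn
      left
      simpa using hn
  | cons ψ l ih =>
      intro n hn
      rcases hn with hn | hn
      · right; exact ⟨ψ, List.mem_cons_self, hn⟩
      · rcases ih hn with h | ⟨χ, hχ, h⟩
        · left; exact h
        · right; exact ⟨χ, List.mem_cons_of_mem _ hχ, h⟩

/-- Renaming of variables in terms. -/
def Term.ren (ρ : ℕ → ℕ) : Term L → Term L
  | .var n => .var (ρ n)
  | .func f ts => .func f (fun k => (ts k).ren ρ)

/-- Renaming of variables in formulas (only used on quantifier-free formulas). -/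
def Formula.ren (ρ : ℕ → ℕ) : Formula L → Formula L
  | .rel P ts => .rel P (fun k => (ts k).ren ρ)
  | .eq t₁ t₂ => .eq (t₁.ren ρ) (t₂.ren ρ)
  | .sconj φ ψ => .sconj (φ.ren ρ) (ψ.ren ρ)
  | .wconj φ ψ => .wconj (φ.ren ρ) (ψ.ren ρ)
  | .wdisj φ ψ => .wdisj (φ.ren ρ) (ψ.ren ρ)
  | .impl φ ψ => .impl (φ.ren ρ) (ψ.ren ρ)
  | .all x φ => .all x (φ.ren ρ)
  | .ex x φ => .ex x (φ.ren ρ)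

lemma Term.ren_val (M : Structure L A) (ρ : ℕ → ℕ) (v : ℕ → M.Dom) :
    ∀ t : Term L, (t.ren ρ).val M v = t.val M (v ∘ ρ) := by
  intro t
  induction t with
  | var n => rfl
  | func f ts ih =>
      show M.funMap f _ = M.funMap f _
      congr 1
      funext k
      exact ih k

lemma Term.ren_fvars (ρ : ℕ → ℕ) : ∀ t : Term L, (t.ren ρ).fvars ⊆ ρ '' t.fvars := by
  intro t
  induction t with
  | var n =>
      intro m hm
      have hmn : m = ρ n := by simpa [Term.ren, Term.fvars] using hm
      exact ⟨n, by simp [Term.fvars], hmn.symm⟩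
  | func f ts ih =>
      intro m hm
      simp only [Term.ren, Term.fvars, Set.mem_iUnion] at hm
      obtain ⟨k, hk⟩ := hm
      obtain ⟨n, hn, rfl⟩ := ih k hk
      exact ⟨n, by simp only [Term.fvars, Set.mem_iUnion]; exact ⟨k, hn⟩, rfl⟩

lemma qfpos_ren {ρ : ℕ → ℕ} {φ : Formula L} (h : QFPos φ) : QFPos (φ.ren ρ) := by
  induction h with
  | atom h =>
      cases h with
      | rel P ts => exact QFPos.atom (IsAtomicFormula.rel P _)
      | eq t₁ t₂ => exact QFPos.atom (IsAtomicFormula.eq _ _)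
  | sconj _ _ ih₁ ih₂ => exact QFPos.sconj ih₁ ih₂
  | wconj _ _ ih₁ ih₂ => exact QFPos.wconj ih₁ ih₂
  | wdisj _ _ ih₁ ih₂ => exact QFPos.wdisj ih₁ ih₂

lemma qfpos_ren_val {M : Structure L A} {ρ : ℕ → ℕ} {φ : Formula L} (h : QFPos φ)
    (v : ℕ → M.Dom) : (φ.ren ρ).val M v = φ.val M (v ∘ ρ) := by
  induction h with
  | atom h =>
      cases h with
      | rel P ts =>
          show M.relMap P _ = M.relMap P _
          congr 1
          funext k
          exact Term.ren_val M ρ v (ts k)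
      | eq t₁ t₂ =>
          show (if _ then _ else _) = (if _ then _ else _)
          rw [Term.ren_val, Term.ren_val]
  | sconj _ _ ih₁ ih₂ => show _ * _ = _ * _; rw [ih₁, ih₂]
  | wconj _ _ ih₁ ih₂ => show _ ⊓ _ = _ ⊓ _; rw [ih₁, ih₂]
  | wdisj _ _ ih₁ ih₂ => show _ ⊔ _ = _ ⊔ _; rw [ih₁, ih₂]

lemma qfpos_ren_fvars {ρ : ℕ → ℕ} {φ : Formula L} (h : QFPos φ) :
    (φ.ren ρ).fvars ⊆ ρ '' φ.fvars := by
  induction h with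
  | atom h =>
      cases h with
      | rel P ts =>
          intro m hm
          simp only [Formula.ren, Formula.fvars, Set.mem_iUnion] at hm
          obtain ⟨k, hk⟩ := hm
          obtain ⟨n, hn, rfl⟩ := Term.ren_fvars ρ (ts k) hk
          exact ⟨n, by simp only [Formula.fvars, Set.mem_iUnion]; exact ⟨k, hn⟩, rfl⟩
      | eq t₁ t₂ =>
          intro m hm
          rcases hm with hm | hm
          · obtain ⟨n, hn, rfl⟩ := Term.ren_fvars ρ t₁ hm
            exact ⟨n, Set.mem_union_left _ hn, rfl⟩
          · obtain ⟨n, hn, rfl⟩ := Term.ren_fvars ρ t₂ hm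
            exact ⟨n, Set.mem_union_right _ hn, rfl⟩
  | sconj _ _ ih₁ ih₂ =>
      intro m hm
      rcases hm with hm | hm
      · obtain ⟨n, hn, rfl⟩ := ih₁ hm; exact ⟨n, Set.mem_union_left _ hn, rfl⟩
      · obtain ⟨n, hn, rfl⟩ := ih₂ hm; exact ⟨n, Set.mem_union_right _ hn, rfl⟩
  | wconj _ _ ih₁ ih₂ =>
      intro m hm
      rcases hm with hm | hm
      · obtain ⟨n, hn, rfl⟩ := ih₁ hm; exact ⟨n, Set.mem_union_left _ hn, rfl⟩
      · obtain ⟨n, hn, rfl⟩ := ih₂ hm; exact ⟨n, Set.mem_union_right _ hn, rfl⟩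
  | wdisj _ _ ih₁ ih₂ =>
      intro m hm
      rcases hm with hm | hm
      · obtain ⟨n, hn, rfl⟩ := ih₁ hm; exact ⟨n, Set.mem_union_left _ hn, rfl⟩
      · obtain ⟨n, hn, rfl⟩ := ih₂ hm; exact ⟨n, Set.mem_union_right _ hn, rfl⟩

lemma expos_decomp {φ : Formula L} (h : IsExPos φ) :
    ∃ (l : List ℕ) (ψ : Formula L), QFPos ψ ∧ φ = exsF l ψ := by
  induction h with
  | base h => exact ⟨[], _, h, rfl⟩
  | ex x _ ih =>
      obtain ⟨l, ψ, hψ, rfl⟩ := ih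
      exact ⟨x :: l, ψ, hψ, rfl⟩

end Builders
section Vee
variable {A : Type u} [MTLChain A] {L : Lang.{u}}

lemma expos_sentence_valid_iff {M : Structure L A} {l : List ℕ} {ψ : Formula L}
    (hsen : (exsF l ψ).IsSentence) :
    Valid M (exsF l ψ) ↔ ∃ w : ℕ → M.Dom, ψ.val M w = 1 := by
  apply exsF_valid_iff
  rw [Formula.IsSentence, exsF_fvars] at hsen
  exact Set.diff_eq_empty.1 hsen

lemma expos_or (σ₁ σ₂ : Formula L) (h₁ : IsExPos σ₁) (h₂ : IsExPos σ₂)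
    (hs₁ : σ₁.IsSentence) (hs₂ : σ₂.IsSentence) :
    ∃ τ : Formula L, IsExPos τ ∧ τ.IsSentence ∧
      ∀ M : Structure L A, Valid M τ ↔ (Valid M σ₁ ∨ Valid M σ₂) := by
  obtain ⟨l₁, ψ₁, hψ₁, rfl⟩ := expos_decomp h₁
  obtain ⟨l₂, ψ₂, hψ₂, rfl⟩ := expos_decomp h₂
  have hf₁ : ψ₁.fvars ⊆ {n | n ∈ l₁} := by
    rw [Formula.IsSentence, exsF_fvars] at hs₁; exact Set.diff_eq_empty.1 hs₁
  have hf₂ : ψ₂.fvars ⊆ {n | n ∈ l₂} := by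
    rw [Formula.IsSentence, exsF_fvars] at hs₂; exact Set.diff_eq_empty.1 hs₂
  set e : ℕ → ℕ := fun n => 2 * n with he
  set o : ℕ → ℕ := fun n => 2 * n + 1 with ho
  set χ : Formula L := .wdisj (ψ₁.ren e) (ψ₂.ren o) with hχ
  set lv : List ℕ := l₁.map e ++ l₂.map o with hlv
  have hχfv : χ.fvars ⊆ {n | n ∈ lv} := by
    intro n hn
    rcases hn with hn | hn
    · obtain ⟨m, hm, rfl⟩ := qfpos_ren_fvars hψ₁ hn
      simp only [hlv, Set.mem_setOf_eq, List.mem_append, List.mem_map]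
      exact Or.inl ⟨m, hf₁ hm, rfl⟩
    · obtain ⟨m, hm, rfl⟩ := qfpos_ren_fvars hψ₂ hn
      simp only [hlv, Set.mem_setOf_eq, List.mem_append, List.mem_map]
      exact Or.inr ⟨m, hf₂ hm, rfl⟩
  refine ⟨exsF lv χ, exsF_isExPos (IsExPos.base (QFPos.wdisj (qfpos_ren hψ₁) (qfpos_ren hψ₂))),
    exsF_isSentence hχfv, fun M => ?_⟩
  rw [exsF_valid_iff hχfv, expos_sentence_valid_iff hs₁, expos_sentence_valid_iff hs₂]
  constructor
  · rintro ⟨w, hw⟩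
    have : (ψ₁.ren e).val M w ⊔ (ψ₂.ren o).val M w = 1 := hw
    rcases supEqOneIff.1 this with h | h
    · left; exact ⟨w ∘ e, by rw [← qfpos_ren_val hψ₁]; exact h⟩
    · right; exact ⟨w ∘ o, by rw [← qfpos_ren_val hψ₂]; exact h⟩
  · rintro (⟨w, hw⟩ | ⟨w, hw⟩)
    · refine ⟨fun n => if n % 2 = 0 then w (n / 2) else w 0, ?_⟩
      show (ψ₁.ren e).val M _ ⊔ (ψ₂.ren o).val M _ = 1
      apply supEqOneIff.2
      left
      rw [qfpos_ren_val hψ₁]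
      have hcomp : ((fun n => if n % 2 = 0 then w (n / 2) else w 0) ∘ e) = w := by
        funext n
        have h1 : (2 * n) % 2 = 0 := by omega
        have h2 : (2 * n) / 2 = n := by omega
        simp only [Function.comp_apply, he, h1, h2, if_pos]
      rw [hcomp]
      exact hw
    · refine ⟨fun n => if n % 2 = 1 then w (n / 2) else w 0, ?_⟩
      show (ψ₁.ren e).val M _ ⊔ (ψ₂.ren o).val M _ = 1
      apply supEqOneIff.2
      right
      rw [qfpos_ren_val hψ₂]
      have hcomp : ((fun n => if n % 2 = 1 then w (n / 2) else w 0) ∘ o) = w := by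
        funext n
        have h1 : (2 * n + 1) % 2 = 1 := by omega
        have h2 : (2 * n + 1) / 2 = n := by omega
        simp only [Function.comp_apply, ho, h1, h2, if_pos]
      rw [hcomp]
      exact hw

lemma vee_list (σ₀ : Formula L) (l : List (Formula L))
    (h₀ : IsExPos σ₀ ∧ σ₀.IsSentence) (hl : ∀ σ ∈ l, IsExPos σ ∧ σ.IsSentence) :
    ∃ τ : Formula L, IsExPos τ ∧ τ.IsSentence ∧
      ∀ M : Structure L A, Valid M τ ↔ (Valid M σ₀ ∨ ∃ σ ∈ l, Valid M σ) := by
  induction l generalizing σ₀ with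
  | nil =>
      refine ⟨σ₀, h₀.1, h₀.2, fun M => ?_⟩
      simp
  | cons σ₁ l ih =>
      obtain ⟨σ₀₁, hp, hs, hval⟩ := expos_or (A := A) σ₀ σ₁ h₀.1
        (hl σ₁ (List.mem_cons_self)).1 h₀.2 (hl σ₁ (List.mem_cons_self)).2
      obtain ⟨τ, hτp, hτs, hτval⟩ := ih σ₀₁ ⟨hp, hs⟩
        (fun σ h => hl σ (List.mem_cons_of_mem _ h))
      refine ⟨τ, hτp, hτs, fun M => ?_⟩
      rw [hτval, hval]
      constructor
      · rintro ((h | h) | ⟨σ, hσ, h⟩)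
        · exact Or.inl h
        · exact Or.inr ⟨σ₁, List.mem_cons_self, h⟩
        · exact Or.inr ⟨σ, List.mem_cons_of_mem _ hσ, h⟩
      · rintro (h | ⟨σ, hσ, h⟩)
        · exact Or.inl (Or.inl h)
        · rcases List.mem_cons.1 hσ with rfl | h'
          · exact Or.inl (Or.inr h)
          · exact Or.inr ⟨σ, h', h⟩

end Vee
section Ultra
variable {A : Type u} [MTLChain A] {L : Lang.{u}} {I : Type u}

lemma ulim_ex (U : Ultrafilter I) (f : I → A) : ∃ a : A, {i | f i = a} ∈ U := by
  by_contra h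
  push_neg at h
  have h' : ∀ a : A, {i | f i = a}ᶜ ∈ U := fun a =>
    (Ultrafilter.compl_mem_iff_notMem).2 (h a)
  have hint : (⋂ a : A, {i | f i = a}ᶜ) ∈ U := Filter.iInter_mem.mpr h'
  obtain ⟨i, hi⟩ := Ultrafilter.nonempty_of_mem hint
  simp only [Set.mem_iInter, Set.mem_compl_iff, Set.mem_setOf_eq] at hi
  exact hi (f i) rfl

/-- The limit of an `A`-valued function along an ultrafilter. -/
def ulim (U : Ultrafilter I) (f : I → A) : A := Classical.choose (ulim_ex U f)

lemma ulim_spec (U : Ultrafilter I) (f : I → A) : {i | f i = ulim U f} ∈ U :=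
  Classical.choose_spec (ulim_ex U f)

lemma ulim_eq_of {U : Ultrafilter I} {f : I → A} {a : A} (h : {i | f i = a} ∈ U) :
    ulim U f = a := by
  by_contra hne
  obtain ⟨i, hi1, hi2⟩ := Ultrafilter.nonempty_of_mem (Filter.inter_mem (ulim_spec U f) h)
  exact hne (hi1 ▸ hi2)

lemma ulim_const (U : Ultrafilter I) (a : A) : ulim U (fun _ => a) = a := by
  apply ulim_eq_of
  have h : {i : I | a = a} = Set.univ := by ext i; simp
  rw [h]
  exact Filter.univ_mem

lemma ulim_congr {U : Ultrafilter I} {f g : I → A} (h : {i | f i = g i} ∈ U) :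
    ulim U f = ulim U g := by
  apply ulim_eq_of
  have := Filter.inter_mem h (ulim_spec U g)
  apply Filter.mem_of_superset this
  rintro i ⟨h1, h2⟩
  exact h1.trans h2

lemma ulim_eq_one_iff {U : Ultrafilter I} {f : I → A} :
    ulim U f = 1 ↔ {i | f i = 1} ∈ U := by
  constructor
  · intro h; exact h ▸ ulim_spec U f
  · exact ulim_eq_of

lemma ulim_op2 (U : Ultrafilter I) (op : A → A → A) (f g : I → A) :
    ulim U (fun i => op (f i) (g i)) = op (ulim U f) (ulim U g) := by
  apply ulim_eq_of
  have := Filter.inter_mem (ulim_spec U f) (ulim_spec U g)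
  apply Filter.mem_of_superset this
  rintro i ⟨h1, h2⟩
  simp only [Set.mem_setOf_eq] at h1 h2 ⊢
  rw [h1, h2]

lemma ulim_le_ulim {U : Ultrafilter I} {f g : I → A} (h : {i | f i ≤ g i} ∈ U) :
    ulim U f ≤ ulim U g := by
  have := Filter.inter_mem h (Filter.inter_mem (ulim_spec U f) (ulim_spec U g))
  obtain ⟨i, h1, h2, h3⟩ := Ultrafilter.nonempty_of_mem this
  simp only [Set.mem_setOf_eq] at h1 h2 h3
  rw [← h2, ← h3]
  exact h1

/-- Equality almost everywhere along an ultrafilter. -/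
def aeSetoid (U : Ultrafilter I) (D : I → Type u) : Setoid (∀ i, D i) where
  r v w := {i | v i = w i} ∈ U
  iseqv := by
    constructor
    · intro v
      have h : {i | v i = v i} = Set.univ := by ext i; simp
      show {i | v i = v i} ∈ U
      rw [h]
      exact Filter.univ_mem
    · intro v w h
      apply Filter.mem_of_superset h
      intro i hi
      exact hi.symm
    · intro v w z h1 h2
      apply Filter.mem_of_superset (Filter.inter_mem h1 h2)
      rintro i ⟨hi1, hi2⟩
      exact hi1.trans hi2

/-- The `A`-valued ultraproduct of a family of structures. -/
def uProd (Ms : I → Structure L A) (U : Ultrafilter I) : Structure L A where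
  Dom := Quotient (aeSetoid U (fun i => (Ms i).Dom))
  dom_nonempty := ⟨Quotient.mk _ (fun i => Classical.arbitrary _)⟩
  funMap f d := Quotient.mk _ (fun i => (Ms i).funMap f (fun k => (d k).out i))
  relMap P d := ulim U (fun i => (Ms i).relMap P (fun k => (d k).out i))

variable {Ms : I → Structure L A} {U : Ultrafilter I}

lemma out_mk_ae (v : ∀ i, (Ms i).Dom) :
    {i | (Quotient.mk (aeSetoid U (fun i => (Ms i).Dom)) v).out i = v i} ∈ U := by
  have h : Quotient.mk (aeSetoid U (fun i => (Ms i).Dom))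
      ((Quotient.mk (aeSetoid U (fun i => (Ms i).Dom)) v).out) =
      Quotient.mk (aeSetoid U (fun i => (Ms i).Dom)) v := Quotient.out_eq _
  exact Quotient.exact h

lemma uProd_funMap_mk (f : L.Func) (c : Fin (L.funcAr f) → ∀ i, (Ms i).Dom) :
    (uProd Ms U).funMap f (fun k => Quotient.mk _ (c k)) =
      Quotient.mk _ (fun i => (Ms i).funMap f (fun k => c k i)) := by
  apply Quotient.sound
  have hmem : (⋂ k : Fin (L.funcAr f),
      {i | (Quotient.mk (aeSetoid U (fun i => (Ms i).Dom)) (c k)).out i = c k i}) ∈ U :=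
    Filter.iInter_mem.mpr (fun k => out_mk_ae (c k))
  apply Filter.mem_of_superset hmem
  intro i hi
  simp only [Set.mem_iInter, Set.mem_setOf_eq] at hi
  show (Ms i).funMap f _ = (Ms i).funMap f _
  congr 1
  funext k
  exact hi k

lemma uProd_relMap_mk (P : L.Pred) (c : Fin (L.predAr P) → ∀ i, (Ms i).Dom) :
    (uProd Ms U).relMap P (fun k => Quotient.mk _ (c k)) =
      ulim U (fun i => (Ms i).relMap P (fun k => c k i)) := by
  apply ulim_congr
  have hmem : (⋂ k : Fin (L.predAr P),
      {i | (Quotient.mk (aeSetoid U (fun i => (Ms i).Dom)) (c k)).out i = c k i}) ∈ U :=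
    Filter.iInter_mem.mpr (fun k => out_mk_ae (c k))
  apply Filter.mem_of_superset hmem
  intro i hi
  simp only [Set.mem_iInter, Set.mem_setOf_eq] at hi
  show (Ms i).relMap P _ = (Ms i).relMap P _
  congr 1
  funext k
  exact hi k

lemma uProd_term_val (t : Term L) (v : ℕ → ∀ i, (Ms i).Dom) :
    t.val (uProd Ms U) (fun n => Quotient.mk _ (v n)) =
      Quotient.mk _ (fun i => t.val (Ms i) (fun n => v n i)) := by
  induction t with
  | var n => rfl
  | func f ts ih =>
      show (uProd Ms U).funMap f (fun k => (ts k).val _ _) = _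
      have : (fun k => (ts k).val (uProd Ms U) (fun n => Quotient.mk _ (v n))) =
          (fun k => Quotient.mk (aeSetoid U (fun i => (Ms i).Dom))
            (fun i => (ts k).val (Ms i) (fun n => v n i))) := by
        funext k
        exact ih k
      rw [this, uProd_funMap_mk]
      rfl

lemma update_mk_eq (v : ℕ → ∀ i, (Ms i).Dom) (x : ℕ) (d : ∀ i, (Ms i).Dom) :
    Function.update (fun n => Quotient.mk (aeSetoid U (fun i => (Ms i).Dom)) (v n)) x
      (Quotient.mk _ d) = fun n => Quotient.mk _ (Function.update v x d n) := by
  funext n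
  rcases eq_or_ne n x with rfl | hne
  · simp [Function.update_self]
  · simp [Function.update_of_ne hne]

lemma update_coord (v : ℕ → ∀ i, (Ms i).Dom) (x : ℕ) (d : ∀ i, (Ms i).Dom) (i : I) :
    (fun n => Function.update v x d n i) = Function.update (fun n => v n i) x (d i) := by
  funext n
  rcases eq_or_ne n x with rfl | hne
  · simp [Function.update_self]
  · simp [Function.update_of_ne hne]

theorem los (φ : Formula L) (v : ℕ → ∀ i, (Ms i).Dom) :
    φ.val (uProd Ms U) (fun n => Quotient.mk _ (v n)) =
      ulim U (fun i => φ.val (Ms i) (fun n => v n i)) := by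
  induction φ generalizing v with
  | rel P ts =>
      show (uProd Ms U).relMap P _ = _
      have : (fun k => (ts k).val (uProd Ms U) (fun n => Quotient.mk _ (v n))) =
          (fun k => Quotient.mk (aeSetoid U (fun i => (Ms i).Dom))
            (fun i => (ts k).val (Ms i) (fun n => v n i))) := by
        funext k
        exact uProd_term_val (ts k) v
      rw [this, uProd_relMap_mk]
      rfl
  | eq t₁ t₂ =>
      simp only [Formula.val]
      rw [uProd_term_val t₁ v, uProd_term_val t₂ v]
      by_cases h : {i | t₁.val (Ms i) (fun n => v n i) = t₂.val (Ms i) (fun n => v n i)} ∈ U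
      · erw [if_pos (Quotient.sound h)]
        symm
        apply ulim_eq_of
        apply Filter.mem_of_superset h
        intro i hi
        simp only [Set.mem_setOf_eq] at hi ⊢
        rw [if_pos hi]
      · erw [if_neg (fun hq : Quotient.mk (aeSetoid U (fun i => (Ms i).Dom)) (fun i => t₁.val (Ms i) (fun n => v n i)) = Quotient.mk _ (fun i => t₂.val (Ms i) (fun n => v n i)) => h (Quotient.exact hq))]
        symm
        apply ulim_eq_of
        have h' : {i | t₁.val (Ms i) (fun n => v n i) = t₂.val (Ms i) (fun n => v n i)}ᶜ ∈ U :=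
          (Ultrafilter.compl_mem_iff_notMem).2 h
        apply Filter.mem_of_superset h'
        intro i hi
        simp only [Set.mem_compl_iff, Set.mem_setOf_eq] at hi
        simp only [Set.mem_setOf_eq]
        rw [if_neg hi]
  | sconj φ ψ ihφ ihψ =>
      show φ.val _ _ * ψ.val _ _ = _
      rw [ihφ v, ihψ v, ← ulim_op2 U (fun a b => a * b)]
      rfl
  | wconj φ ψ ihφ ihψ =>
      show φ.val _ _ ⊓ ψ.val _ _ = _
      rw [ihφ v, ihψ v, ← ulim_op2 U (fun a b => a ⊓ b)]
      rfl
  | wdisj φ ψ ihφ ihψ =>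
      show φ.val _ _ ⊔ ψ.val _ _ = _
      rw [ihφ v, ihψ v, ← ulim_op2 U (fun a b => a ⊔ b)]
      rfl
  | impl φ ψ ihφ ihψ =>
      show MTLChain.resid (φ.val _ _) (ψ.val _ _) = _
      rw [ihφ v, ihψ v, ← ulim_op2 U (fun a b => MTLChain.resid a b)]
      rfl
  | all x φ ih =>
      simp only [Formula.val]
      apply le_antisymm
      · choose dm hdm using fun i => existsEqIInf
          (fun d : (Ms i).Dom => φ.val (Ms i) (Function.update (fun n => v n i) x d))
        have h1 : (⨅ a, φ.val (uProd Ms U)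
              (Function.update (fun n => Quotient.mk (aeSetoid U (fun i => (Ms i).Dom)) (v n)) x a))
            ≤ φ.val (uProd Ms U)
              (Function.update (fun n => Quotient.mk (aeSetoid U (fun i => (Ms i).Dom)) (v n)) x
                (Quotient.mk _ dm)) :=
          iInf_le (fun a => φ.val (uProd Ms U)
            (Function.update (fun n => Quotient.mk (aeSetoid U (fun i => (Ms i).Dom)) (v n)) x a)) _
        refine h1.trans ?_
        erw [update_mk_eq, ih]
        apply ulim_le_ulim
        apply Filter.univ_mem'
        intro i
        simp only [Set.mem_setOf_eq]
        rw [update_coord]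
        rw [hdm i]
      · apply le_iInf
        intro a
        rw [← Quotient.out_eq a]; erw [update_mk_eq, ih]
        apply ulim_le_ulim
        apply Filter.univ_mem'
        intro i
        simp only [Set.mem_setOf_eq]
        rw [update_coord]
        exact iInf_le (fun d => φ.val (Ms i) (Function.update (fun n => v n i) x d)) _
  | ex x φ ih =>
      simp only [Formula.val]
      apply le_antisymm
      · apply iSup_le
        intro a
        rw [← Quotient.out_eq a]; erw [update_mk_eq, ih]
        apply ulim_le_ulim
        apply Filter.univ_mem'
        intro i
        simp only [Set.mem_setOf_eq]
        rw [update_coord]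
        exact le_iSup (fun d => φ.val (Ms i) (Function.update (fun n => v n i) x d)) _
      · choose dm hdm using fun i => existsEqISup
          (fun d : (Ms i).Dom => φ.val (Ms i) (Function.update (fun n => v n i) x d))
        have h1 : φ.val (uProd Ms U)
              (Function.update (fun n => Quotient.mk (aeSetoid U (fun i => (Ms i).Dom)) (v n)) x
                (Quotient.mk _ dm))
            ≤ ⨆ a, φ.val (uProd Ms U)
              (Function.update (fun n => Quotient.mk (aeSetoid U (fun i => (Ms i).Dom)) (v n)) x a) :=
          le_iSup (fun a => φ.val (uProd Ms U)
            (Function.update (fun n => Quotient.mk (aeSetoid U (fun i => (Ms i).Dom)) (v n)) x a)) _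
        refine le_trans ?_ h1
        erw [update_mk_eq, ih]
        apply ulim_le_ulim
        apply Filter.univ_mem'
        intro i
        simp only [Set.mem_setOf_eq]
        rw [update_coord]
        rw [hdm i]

lemma valid_uProd_of_mem {σ : Formula L} (h : {i | Valid (Ms i) σ} ∈ U) :
    Valid (uProd Ms U) σ := by
  intro v'
  have hv' : (fun n => Quotient.mk (aeSetoid U (fun i => (Ms i).Dom)) ((v' n).out)) = v' := by
    funext n
    exact Quotient.out_eq _
  rw [← hv', los]
  apply ulim_eq_of
  apply Filter.mem_of_superset h
  intro i hi
  exact hi _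

end Ultra
section Expansion
variable {A : Type u} [MTLChain A] {L : Lang.{u}} {C : Type u}

/-- Expansion of a language by a type of constants. -/
def Lang.withConsts (L : Lang.{u}) (C : Type u) : Lang.{u} where
  Pred := L.Pred
  predAr := L.predAr
  Func := L.Func ⊕ C
  funcAr := fun f => Sum.elim L.funcAr (fun _ => 0) f

/-- Lifting of terms to the expanded language. -/
def Term.lift : Term L → Term (L.withConsts C)
  | .var n => .var n
  | .func f ts => .func (.inl f) (fun k => (ts k).lift)

/-- Lifting of formulas to the expanded language. -/
def Formula.lift : Formula L → Formula (L.withConsts C)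
  | .rel P ts => .rel P (fun k => (ts k).lift)
  | .eq t₁ t₂ => .eq t₁.lift t₂.lift
  | .sconj φ ψ => .sconj φ.lift ψ.lift
  | .wconj φ ψ => .wconj φ.lift ψ.lift
  | .wdisj φ ψ => .wdisj φ.lift ψ.lift
  | .impl φ ψ => .impl φ.lift ψ.lift
  | .all x φ => .all x φ.lift
  | .ex x φ => .ex x φ.lift

/-- Reduct of a structure for the expanded language. -/
def Structure.reduct (S : Structure (L.withConsts C) A) : Structure L A where
  Dom := S.Dom
  dom_nonempty := S.dom_nonempty
  funMap f d := S.funMap (.inl f) d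
  relMap := S.relMap

/-- Expansion of a structure by interpretations of the constants. -/
def Structure.expand (N : Structure L A) (c : C → N.Dom) : Structure (L.withConsts C) A where
  Dom := N.Dom
  dom_nonempty := N.dom_nonempty
  funMap := fun f => match f with
    | .inl f => N.funMap f
    | .inr x => fun _ => c x
  relMap := N.relMap

lemma reduct_expand (N : Structure L A) (c : C → N.Dom) : (N.expand c).reduct = N := rfl

lemma lift_term_val (S : Structure (L.withConsts C) A) (v : ℕ → S.Dom) :
    ∀ t : Term L, (Term.lift (C := C) t).val S v = t.val S.reduct v := by
  intro t
  induction t with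
  | var n => rfl
  | func f ts ih =>
      show S.funMap (.inl f) _ = S.reduct.funMap f _
      show S.funMap (.inl f) _ = S.funMap (.inl f) _
      congr 1
      funext k
      exact ih k

lemma lift_val (S : Structure (L.withConsts C) A) :
    ∀ (φ : Formula L) (v : ℕ → S.Dom), (Formula.lift (C := C) φ).val S v = φ.val S.reduct v := by
  intro φ
  induction φ with
  | rel P ts =>
      intro v
      show S.relMap P _ = S.relMap P _
      congr 1
      funext k
      exact lift_term_val S v (ts k)
  | eq t₁ t₂ =>
      intro v
      show (if _ then _ else _) = (if _ then _ else _)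
      rw [lift_term_val S v t₁, lift_term_val S v t₂]
      congr
  | sconj φ ψ ihφ ihψ => intro v; show _ * _ = _ * _; rw [ihφ v, ihψ v]
  | wconj φ ψ ihφ ihψ => intro v; show _ ⊓ _ = _ ⊓ _; rw [ihφ v, ihψ v]
  | wdisj φ ψ ihφ ihψ => intro v; show _ ⊔ _ = _ ⊔ _; rw [ihφ v, ihψ v]
  | impl φ ψ ihφ ihψ =>
      intro v
      show MTLChain.resid _ _ = MTLChain.resid _ _
      rw [ihφ v, ihψ v]
  | all x φ ih =>
      intro v
      show (⨅ a : S.Dom, _) = (⨅ a : S.reduct.Dom, _)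
      exact iInf_congr (fun a => ih _)
  | ex x φ ih =>
      intro v
      show (⨆ a : S.Dom, _) = (⨆ a : S.reduct.Dom, _)
      exact iSup_congr (fun a => ih _)

lemma lift_valid_iff (S : Structure (L.withConsts C) A) (φ : Formula L) :
    Valid S (Formula.lift (C := C) φ) ↔ Valid S.reduct φ := by
  constructor
  · intro h v; erw [← lift_val]; exact h v
  · intro h v; rw [lift_val]; exact h v

/-- The constant term associated to an element. -/
def cterm (x : C) : Term (L.withConsts C) := .func (.inr x) (fun k => k.elim0)

lemma cterm_val_expand (N : Structure L A) (c : C → N.Dom) (x : C) (v : ℕ → N.Dom) :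
    (cterm (L := L) x).val (N.expand c) v = c x := rfl

end Expansion
section Diagram
variable {A : Type u} [MTLChain A] {L : Lang.{u}}

lemma exists_coding {X : Type u} [Nonempty X] (l : List X) :
    ∃ (ρ : X → ℕ) (w : ℕ → X), (∀ d ∈ l, w (ρ d) = d) ∧ (∀ d ∈ l, ρ d < l.length) := by
  induction l with
  | nil => exact ⟨fun _ => 0, fun _ => Classical.arbitrary _, by simp, by simp⟩
  | cons x l ih =>
      obtain ⟨ρ, w, h1, h2⟩ := ih
      refine ⟨fun d => if d = x then l.length else ρ d,
        fun n => if n = l.length then x else w n, ?_, ?_⟩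
      · intro d hd
        rcases eq_or_ne d x with rfl | hne
        · simp
        · rcases List.mem_cons.1 hd with h | h
          · exact absurd h hne
          · have hρ : ρ d < l.length := h2 d h
            simp only [if_neg hne, if_neg (Nat.ne_of_lt hρ)]
            exact h1 d h
      · intro d hd
        rcases eq_or_ne d x with rfl | hne
        · simp [List.length_cons]
        · rcases List.mem_cons.1 hd with h | h
          · exact absurd h hne
          · simp only [if_neg hne, List.length_cons]
            exact Nat.lt_succ_of_lt (h2 d h)

variable (M : Structure L A)

/-- Diagram atoms: predicate facts and function facts about tuples in `M`. -/
def DAt : Type u :=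
  (Σ P : L.Pred, Fin (L.predAr P) → M.Dom) ⊕ (Σ f : L.Func, Fin (L.funcAr f) → M.Dom)

def okA : DAt M → Prop
  | .inl ⟨P, d⟩ => M.relMap P d = 1
  | .inr _ => True

def elemsOf : DAt M → List M.Dom
  | .inl ⟨_, d⟩ => List.ofFn d
  | .inr ⟨f, d⟩ => M.funMap f d :: List.ofFn d

/-- The diagram atom as a formula of `L` with variables given by a coding. -/
def frmOf (ρ : M.Dom → ℕ) : DAt M → Formula L
  | .inl ⟨P, d⟩ => .rel P (fun k => .var (ρ (d k)))
  | .inr ⟨f, d⟩ => .eq (.func f (fun k => .var (ρ (d k)))) (.var (ρ (M.funMap f d)))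

/-- The diagram atom as a sentence of the expanded language. -/
def sentOf : DAt M → Formula (L.withConsts M.Dom)
  | .inl ⟨P, d⟩ => .rel P (fun k => cterm (d k))
  | .inr ⟨f, d⟩ => .eq (.func (.inl f) (fun k => cterm (d k))) (cterm (M.funMap f d))

lemma frmOf_qfpos (ρ : M.Dom → ℕ) (a : DAt M) : QFPos (frmOf M ρ a) := by
  rcases a with ⟨P, d⟩ | ⟨f, d⟩
  · exact QFPos.atom (IsAtomicFormula.rel _ _)
  · exact QFPos.atom (IsAtomicFormula.eq _ _)

lemma frmOf_fvars (ρ : M.Dom → ℕ) (a : DAt M) :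
    (frmOf M ρ a).fvars ⊆ {n | ∃ d ∈ elemsOf M a, ρ d = n} := by
  rcases a with ⟨P, d⟩ | ⟨f, d⟩
  · intro n hn
    simp only [frmOf, Formula.fvars, Term.fvars, Set.mem_iUnion, Set.mem_singleton_iff] at hn
    obtain ⟨k, rfl⟩ := hn
    exact ⟨d k, by simp [elemsOf, List.mem_ofFn], rfl⟩
  · intro n hn
    rcases hn with hn | hn
    · simp only [Term.fvars, Set.mem_iUnion, Set.mem_singleton_iff] at hn
      obtain ⟨k, rfl⟩ := hn
      exact ⟨d k, by simp [elemsOf, List.mem_ofFn], rfl⟩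
    · simp only [Term.fvars, Set.mem_singleton_iff] at hn
      subst hn
      exact ⟨M.funMap f d, by simp [elemsOf], rfl⟩

lemma sentOf_rel_val (N : Structure L A) (c : M.Dom → N.Dom)
    (P : L.Pred) (d : Fin (L.predAr P) → M.Dom) (v : ℕ → N.Dom) :
    (sentOf M (.inl ⟨P, d⟩)).val (N.expand c) v = N.relMap P (fun k => c (d k)) := rfl

lemma sentOf_eq_val (N : Structure L A) (c : M.Dom → N.Dom)
    (f : L.Func) (d : Fin (L.funcAr f) → M.Dom) (v : ℕ → N.Dom) :
    (sentOf M (.inr ⟨f, d⟩)).val (N.expand c) v =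
      if N.funMap f (fun k => c (d k)) = c (M.funMap f d) then (1:A) else ⊥ := rfl

lemma frmOf_rel_val (N : Structure L A) (ρ : M.Dom → ℕ) (wN : ℕ → N.Dom)
    (P : L.Pred) (d : Fin (L.predAr P) → M.Dom) :
    (frmOf M ρ (.inl ⟨P, d⟩)).val N wN = N.relMap P (fun k => wN (ρ (d k))) := rfl

lemma frmOf_eq_val (N : Structure L A) (ρ : M.Dom → ℕ) (wN : ℕ → N.Dom)
    (f : L.Func) (d : Fin (L.funcAr f) → M.Dom) :
    (frmOf M ρ (.inr ⟨f, d⟩)).val N wN =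
      if N.funMap f (fun k => wN (ρ (d k))) = wN (ρ (M.funMap f d)) then (1:A) else ⊥ := rfl

lemma frmOf_val_self (ρ : M.Dom → ℕ) (w : ℕ → M.Dom) (a : DAt M)
    (hw : ∀ d ∈ elemsOf M a, w (ρ d) = d) (hok : okA M a) :
    (frmOf M ρ a).val M w = 1 := by
  rcases a with ⟨P, d⟩ | ⟨f, d⟩
  · rw [frmOf_rel_val]
    have h1 : (fun k => w (ρ (d k))) = d := by
      funext k
      exact hw (d k) (by simp [elemsOf, List.mem_ofFn])
    rw [h1]
    exact hok
  · rw [frmOf_eq_val]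
    have h1 : (fun k => w (ρ (d k))) = d := by
      funext k
      exact hw (d k) (by simp [elemsOf, List.mem_ofFn])
    rw [h1, hw (M.funMap f d) (by simp [elemsOf])]
    exact if_pos rfl

/-- The finite step for the positive diagram: finitely many diagram atoms can be
realized in `N` whenever every existential positive consequence of `M` holds in `N`. -/
lemma finite_diagram_step (N : Structure L A)
    (hMN : ∀ σ : Formula L, IsExPos σ → σ.IsSentence → Valid M σ → Valid N σ)
    (i : Finset (DAt M)) :
    ∃ c : M.Dom → N.Dom, ∀ a ∈ i, okA M a → Valid (N.expand c) (sentOf M a) := by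
  classical
  set la := i.toList.filter (fun a => decide (okA M a)) with hla
  have hmem_la : ∀ a, a ∈ la ↔ (a ∈ i ∧ okA M a) := by
    intro a
    simp [hla, List.mem_filter, Finset.mem_toList]
  set S := la.flatMap (elemsOf M) with hS
  have hmem_S : ∀ a ∈ la, ∀ d ∈ elemsOf M a, d ∈ S := by
    intro a ha d hd
    rw [hS]
    exact List.mem_flatMap.2 ⟨a, ha, hd⟩
  obtain ⟨ρ, w, hw, hρ⟩ := exists_coding S
  set lf := la.map (frmOf M ρ) with hlf
  set χ := cnjL lf with hχ
  set lv := 0 :: List.range S.length with hlv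
  have hfv : χ.fvars ⊆ {n | n ∈ lv} := by
    intro n hn
    rcases cnjL_fvars lf hn with h | ⟨ψ, hψ, h⟩
    · simp only [Set.mem_singleton_iff] at h
      subst h
      simp [hlv]
    · rw [hlf] at hψ
      obtain ⟨a, ha, rfl⟩ := List.mem_map.1 hψ
      obtain ⟨d, hd, rfl⟩ := frmOf_fvars M ρ a h
      have : ρ d < S.length := hρ d (hmem_S a ha d hd)
      simp only [hlv, Set.mem_setOf_eq, List.mem_cons, List.mem_range]
      exact Or.inr this
  have hχpos : QFPos χ := by
    apply cnjL_qfpos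
    intro ψ hψ
    rw [hlf] at hψ
    obtain ⟨a, _, rfl⟩ := List.mem_map.1 hψ
    exact frmOf_qfpos M ρ a
  have hvalM : Valid M (exsF lv χ) := by
    rw [exsF_valid_iff hfv]
    refine ⟨w, ?_⟩
    rw [hχ, cnjL_val_one_iff]
    intro ψ hψ
    rw [hlf] at hψ
    obtain ⟨a, ha, rfl⟩ := List.mem_map.1 hψ
    exact frmOf_val_self M ρ w a (fun d hd => hw d (hmem_S a ha d hd)) ((hmem_la a).1 ha).2
  have hvalN : Valid N (exsF lv χ) :=
    hMN _ (exsF_isExPos (IsExPos.base hχpos)) (exsF_isSentence hfv) hvalM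
  obtain ⟨wN, hwN⟩ := (exsF_valid_iff hfv).1 hvalN
  rw [hχ, cnjL_val_one_iff] at hwN
  refine ⟨fun d => wN (ρ d), ?_⟩
  intro a ha hok
  have hala : a ∈ la := (hmem_la a).2 ⟨ha, hok⟩
  have hfrm : (frmOf M ρ a).val N wN = 1 :=
    hwN _ (by rw [hlf]; exact List.mem_map.2 ⟨a, hala, rfl⟩)
  intro v
  rcases a with ⟨P, d⟩ | ⟨f, d⟩
  · erw [sentOf_rel_val]
    rw [frmOf_rel_val] at hfrm
    exact hfrm
  · erw [sentOf_eq_val]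
    rw [frmOf_eq_val] at hfrm
    exact hfrm

end Diagram
section Main
variable {A : Type u} [MTLChain A] {L : Lang.{u}}

lemma mem_of_atTop_finset {X : Type u} (a : X) :
    {j : Finset X | a ∈ j} ∈ Ultrafilter.of (Filter.atTop : Filter (Finset X)) := by
  apply Ultrafilter.of_le (Filter.atTop : Filter (Finset X))
  apply Filter.mem_atTop_sets.2
  refine ⟨{a}, fun b hb => ?_⟩
  exact Finset.singleton_subset_iff.1 (Finset.le_iff_subset.1 hb)

lemma exists_good_model (T : Set (Formula L))
    (hcons : ∃ M : Structure L A, Models M T) (N : Structure L A)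
    (hN : ∀ σ : Formula L, IsExPos σ → σ.IsSentence →
      (∀ M' : Structure L A, Models M' T → Valid M' σ) → Valid N σ) :
    ∃ M : Structure L A, Models M T ∧
      ∀ σ : Formula L, IsExPos σ → σ.IsSentence → Valid M σ → Valid N σ := by
  classical
  have hstep : ∀ i : Finset (Formula L), ∃ M' : Structure L A, Models M' T ∧
      ∀ σ ∈ i, IsExPos σ → σ.IsSentence → ¬ Valid N σ → ¬ Valid M' σ := by
    intro i
    by_contra hno
    push_neg at hno
    set lb := i.toList.filter
      (fun σ => decide (IsExPos σ ∧ σ.IsSentence ∧ ¬ Valid N σ)) with hlb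
    have hmem_lb : ∀ σ, σ ∈ lb ↔ σ ∈ i ∧ (IsExPos σ ∧ σ.IsSentence ∧ ¬ Valid N σ) := by
      intro σ
      simp [hlb, List.mem_filter, Finset.mem_toList]
    have hall : ∀ M' : Structure L A, Models M' T → ∃ σ ∈ lb, Valid M' σ := by
      intro M' hM'
      obtain ⟨σ, hσi, hp, hs, hnv, hv⟩ := hno M' hM'
      exact ⟨σ, (hmem_lb σ).2 ⟨hσi, hp, hs, hnv⟩, hv⟩
    cases hlb' : lb with
    | nil =>
        obtain ⟨M₀, hM₀⟩ := hcons
        obtain ⟨σ, hσ, _⟩ := hall M₀ hM₀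
        rw [hlb'] at hσ
        exact absurd hσ (List.not_mem_nil)
    | cons σ₀ rest =>
        have h0 := (hmem_lb σ₀).1 (hlb' ▸ (List.mem_cons_self (a := σ₀) (l := rest)))
        have hr : ∀ σ ∈ rest, IsExPos σ ∧ σ.IsSentence := by
          intro σ h
          have := (hmem_lb σ).1 (hlb' ▸ List.mem_cons_of_mem σ₀ h)
          exact ⟨this.2.1, this.2.2.1⟩
        obtain ⟨τ, hτp, hτs, hτval⟩ := vee_list (A := A) σ₀ rest ⟨h0.2.1, h0.2.2.1⟩ hr
        have hτN : Valid N τ := by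
          apply hN τ hτp hτs
          intro M' hM'
          apply (hτval M').2
          obtain ⟨σ, hσ, hv⟩ := hall M' hM'
          rw [hlb'] at hσ
          rcases List.mem_cons.1 hσ with rfl | h
          · exact Or.inl hv
          · exact Or.inr ⟨σ, h, hv⟩
        rcases (hτval N).1 hτN with h | ⟨σ, hσ, hv⟩
        · exact h0.2.2.2 h
        · exact ((hmem_lb σ).1 (hlb' ▸ List.mem_cons_of_mem σ₀ hσ)).2.2.2 hv
  choose Ms hMs using hstep
  refine ⟨uProd Ms (Ultrafilter.of Filter.atTop), ?_, ?_⟩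
  · intro φ hφ
    apply valid_uProd_of_mem
    have h : {i : Finset (Formula L) | Valid (Ms i) φ} = Set.univ := by
      ext i
      simp only [Set.mem_setOf_eq, Set.mem_univ, iff_true]
      exact (hMs i).1 φ hφ
    rw [h]
    exact Filter.univ_mem
  · intro σ hp hs hvM
    by_contra hnv
    set v : ℕ → ∀ i : Finset (Formula L), (Ms i).Dom :=
      fun _ i => Classical.arbitrary _ with hvdef
    have hv := hvM (fun n => Quotient.mk _ (v n))
    rw [los] at hv
    obtain ⟨i, hi1, hi2⟩ := Ultrafilter.nonempty_of_mem
      (Filter.inter_mem (ulim_eq_one_iff.1 hv) (mem_of_atTop_finset σ))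
    have hvi : Valid (Ms i) σ := (valid_iff_val hs _).2 hi1
    exact (hMs i).2 σ hi2 hp hs hnv hvi

lemma hom_into_elem_ext (hbot : (⊥ : A) ≠ 1) (M N : Structure L A)
    (hMN : ∀ σ : Formula L, IsExPos σ → σ.IsSentence → Valid M σ → Valid N σ) :
    ∃ (NN : Structure L A) (g : M.Dom → NN.Dom), IsHom M NN g ∧
      ∀ φ : Formula L, Valid NN φ → Valid N φ := by
  classical
  choose c hc using finite_diagram_step M N hMN
  set Ns : Finset (DAt M) → Structure (L.withConsts M.Dom) A :=
    fun i => N.expand (c i) with hNs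
  set U : Ultrafilter (Finset (DAt M)) := Ultrafilter.of Filter.atTop with hU
  refine ⟨(uProd Ns U).reduct, fun d => Quotient.mk _ (fun i => c i d), ⟨?_, ?_⟩, ?_⟩
  · -- map_fun
    intro f d
    show Quotient.mk _ (fun i => c i (M.funMap f d)) =
      (uProd Ns U).funMap (.inl f) (fun k => Quotient.mk _ (fun i => c i (d k)))
    erw [uProd_funMap_mk]
    apply Quotient.sound
    have hsup : {i : Finset (DAt M) | Sum.inr ⟨f, d⟩ ∈ i} ⊆
        {i | c i (M.funMap f d) = (Ns i).funMap (Sum.inl f) (fun k => c i (d k))} := by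
      intro i hi
      have hval := hc i (Sum.inr ⟨f, d⟩) hi trivial (fun _ => c i (M.funMap f d))
      rw [sentOf_eq_val] at hval
      by_cases h : N.funMap f (fun k => c i (d k)) = c i (M.funMap f d)
      · exact h.symm
      · rw [if_neg h] at hval
        exact absurd hval hbot
    exact Filter.mem_of_superset (mem_of_atTop_finset _) hsup
  · -- map_rel
    intro P d hPd
    show (uProd Ns U).relMap P (fun k => Quotient.mk _ (fun i => c i (d k))) = 1
    erw [uProd_relMap_mk]
    apply ulim_eq_one_iff.2
    have hsup : {i : Finset (DAt M) | Sum.inl ⟨P, d⟩ ∈ i} ⊆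
        {i | (Ns i).relMap P (fun k => c i (d k)) = 1} := by
      intro i hi
      have hval := hc i (Sum.inl ⟨P, d⟩) hi hPd (fun _ => Classical.arbitrary _)
      erw [sentOf_rel_val] at hval
      exact hval
    exact Filter.mem_of_superset (mem_of_atTop_finset _) hsup
  · -- transfer of validity back to N
    intro φ hφ v₀
    have h1 : Valid (uProd Ns U) (Formula.lift (C := M.Dom) φ) :=
      (lift_valid_iff (uProd Ns U) φ).2 hφ
    set v : ℕ → ∀ i : Finset (DAt M), (Ns i).Dom := fun n _ => v₀ n with hvdef
    have hv := h1 (fun n => Quotient.mk _ (v n))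
    rw [los] at hv
    have h2 : (fun i : Finset (DAt M) =>
        (Formula.lift (C := M.Dom) φ).val (Ns i) (fun n => v n i)) =
        fun _ => φ.val N v₀ := by
      funext i
      exact lift_val (Ns i) φ v₀
    rw [h2, ulim_const] at hv
    exact hv

end Main
/-- **Theorem 5.1: axiomatization by existential positive sentences.**  A
consistent theory `T` is closed under homomorphisms iff it is axiomatized by a
set of existential positive sentences. -/
theorem expos_axiomatization {A : Type u} [MTLChain A] {L : Lang.{u}}
    (T : Set (Formula L)) (hsent : ∀ σ ∈ T, σ.IsSentence)
    (hcons : ∃ M : Structure L A, Models M T) :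
    (∀ (M N : Structure L A) (g : M.Dom → N.Dom),
        IsHom M N g → Models M T → Models N T) ↔
      ∃ Sig : Set (Formula L), (∀ σ ∈ Sig, IsExPos σ ∧ σ.IsSentence) ∧
        ∀ M : Structure L A, Models M T ↔ Models M Sig := by
  constructor
  · intro hclosed
    by_cases hbot : (⊥ : A) = 1
    · -- degenerate chain: every formula is valid in every structure
      have hall : ∀ (K : Structure L A) (φ : Formula L) (v : ℕ → K.Dom), φ.val K v = 1 := by
        intro K φ v
        exact le_antisymm (le_one' _) (hbot ▸ bot_le)
      refine ⟨∅, fun σ hσ => absurd hσ (Set.notMem_empty σ), fun M => ?_⟩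
      constructor
      · intro _ σ hσ
        exact absurd hσ (Set.notMem_empty σ)
      · intro _ φ _ v
        exact hall M φ v
    · refine ⟨{σ | IsExPos σ ∧ σ.IsSentence ∧
        ∀ M' : Structure L A, Models M' T → Valid M' σ}, ?_, ?_⟩
      · rintro σ ⟨h1, h2, _⟩
        exact ⟨h1, h2⟩
      · intro N
        constructor
        · intro hNT σ hσ
          exact hσ.2.2 N hNT
        · intro hNSig
          have hN : ∀ σ : Formula L, IsExPos σ → σ.IsSentence →
              (∀ M' : Structure L A, Models M' T → Valid M' σ) → Valid N σ := by
            intro σ hp hs hc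
            exact hNSig σ ⟨hp, hs, hc⟩
          obtain ⟨M, hMT, hMN⟩ := exists_good_model T hcons N hN
          obtain ⟨NN, g, hg, htr⟩ := hom_into_elem_ext hbot M N hMN
          have hNNT : Models NN T := hclosed M NN g hg hMT
          intro φ hφ
          exact htr φ (hNNT φ hφ)
  · rintro ⟨Sig, hSig, hax⟩ M N g hg hMT
    have hMSig : Models M Sig := (hax M).1 hMT
    apply (hax N).2
    intro σ hσ
    have hp := (hSig σ hσ).1
    have hs := (hSig σ hσ).2
    have h1 : σ.val M (fun _ => Classical.arbitrary _) = 1 := hMSig σ hσ _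
    have h2 := hom_pres_expos hg hp _ h1
    intro v
    rw [sentence_val_congr hs v (g ∘ fun _ => Classical.arbitrary _)]
    exact h2
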